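/- arXiv:1004.1755 — 3 statements merged into one kernel-verified Lean document; each statement's English description precedes it below -/
import Mathlib

section
/- Pass rule, case 3: if x ∈ C and x ≠ t, then NOT_x ∘ T(C,p,t) = T(C,p',t) ∘ NOT_x, where p' agrees with p except that the polarity at control x is toggled (p'(x) = ¬p(x)). -/
def notGate (n : ℕ) (j : Fin n) (x : Fin n → Bool) : Fin n → Bool :=
  Function.update x j (!(x j))

def toffoli (n : ℕ) (C : Finset (Fin n)) (p : Fin n → Bool) (t : Fin n)
    (x : Fin n → Bool) : Fin n → Bool :=
  if ∀ i ∈ C, x i = p i then Function.update x t (!(x t)) else x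

def indicator (n : ℕ) (C : Finset (Fin n)) (p : Fin n → Bool) (x : Fin n → Bool) : Bool :=
  decide (∀ i ∈ C, x i = p i)

def cnotP (n : ℕ) (c t : Fin n) (x : Fin n → Bool) : Fin n → Bool :=
  if x c = true then Function.update x t (!(x t)) else x

def cnotN (n : ℕ) (c t : Fin n) (x : Fin n → Bool) : Fin n → Bool :=
  if x c = false then Function.update x t (!(x t)) else x

def circuitFun (n : ℕ) (gates : List (Finset (Fin n) × (Fin n → Bool))) (t : Fin n) :
    (Fin n → Bool) → (Fin n → Bool) :=
  gates.foldr (fun g f => toffoli n g.1 g.2 t ∘ f) id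

def circuitParity (n : ℕ) (gates : List (Finset (Fin n) × (Fin n → Bool)))
    (x : Fin n → Bool) : Bool :=
  gates.foldr (fun g b => xor (indicator n g.1 g.2 x) b) false

theorem pass_rule_case3 (n : ℕ) (C : Finset (Fin n)) (p : Fin n → Bool) (t x : Fin n)
    (ht : t ∉ C) (hx : x ∈ C) (hxt : x ≠ t) :
    notGate n x ∘ toffoli n C p t =
      toffoli n C (Function.update p x (!(p x))) t ∘ notGate n x := by
  funext y
  simp only [Function.comp_apply, notGate, toffoli]
  have hcond : (∀ i ∈ C, y i = p i) ↔
      (∀ i ∈ C, Function.update y x (!(y x)) i = Function.update p x (!(p x)) i) := by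
    constructor
    · intro h i hi
      by_cases hix : i = x
      · subst hix; simp [h i hi]
      · simp [Function.update_of_ne hix, h i hi]
    · intro h i hi
      have := h i hi
      by_cases hix : i = x
      · subst hix; simpa using this
      · simpa [Function.update_of_ne hix] using this
  by_cases h : ∀ i ∈ C, y i = p i
  · rw [if_pos h]; refine Eq.trans ?_ (if_pos (hcond.mp h)).symm
    have hyx : Function.update y t (!(y t)) x = y x := Function.update_of_ne hxt _ _
    have hyt : Function.update y x (!(y x)) t = y t :=
      Function.update_of_ne (Ne.symm hxt) _ _
    rw [hyx, hyt]
    exact (Function.update_comm hxt _ _ _).symm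
  · rw [if_neg h]; exact (if_neg (fun hc => h (hcond.mpr hc))).symm
end

section
/- Generalized pass rule: let G1 = T(C1,p1,t1) be a Toffoli gate on B^n with n−1 controls and G2 = T(C2,p2,t2) with n−2 controls, such that C1 = C2 ∪ {t2}, t1 ∉ C2 ∪ {t2}, and p1 agrees with p2 on C2. Then G1 ∘ G2 = G2 ∘ G1', where G1' is G1 with the polarity of control t2 toggled. -/
theorem generalized_pass_rule (n : ℕ) (C1 C2 : Finset (Fin n)) (p1 p2 : Fin n → Bool)
    (t1 t2 : Fin n)
    (hC1 : C1.card = n - 1) (hC2 : C2.card = n - 2)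
    (hC : C1 = insert t2 C2) (ht2 : t2 ∉ C2) (ht1 : t1 ∉ C1)
    (hp : ∀ i ∈ C2, p1 i = p2 i) :
    toffoli n C1 p1 t1 ∘ toffoli n C2 p2 t2 =
      toffoli n C2 p2 t2 ∘ toffoli n C1 (Function.update p1 t2 (!(p1 t2))) t1 := by
  subst hC
  simp only [Finset.mem_insert, not_or] at ht1
  obtain ⟨ht12, ht1C2⟩ := ht1
  funext x
  simp only [Function.comp_apply, toffoli]
  by_cases hq : ∀ i ∈ C2, x i = p2 i
  · simp only [if_pos hq]
    by_cases hc : (!x t2) = p1 t2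
    · have h1 : ∀ i ∈ insert t2 C2, Function.update x t2 (!x t2) i = p1 i := by
        intro i hi
        rcases Finset.mem_insert.mp hi with h | h
        · subst h; simp [hc]
        · rw [Function.update_of_ne (by rintro rfl; exact ht2 h), hq i h, hp i h]
      have h2 : ∀ i ∈ insert t2 C2, x i = Function.update p1 t2 (!p1 t2) i := by
        intro i hi
        rcases Finset.mem_insert.mp hi with h | h
        · subst h; simp [← hc]
        · rw [Function.update_of_ne (by rintro rfl; exact ht2 h), hq i h, hp i h]
      simp only [if_pos h1, if_pos h2]
      have h3 : ∀ i ∈ C2, Function.update x t1 (!x t1) i = p2 i := by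
        intro i hi
        rw [Function.update_of_ne (by rintro rfl; exact ht1C2 hi), hq i hi]
      simp only [if_pos h3, Function.update_of_ne ht12, Function.update_of_ne (Ne.symm ht12)]
      exact Function.update_comm (Ne.symm ht12) _ _ x
    · have h1 : ¬ ∀ i ∈ insert t2 C2, Function.update x t2 (!x t2) i = p1 i := by
        intro h
        exact hc (by simpa using h t2 (Finset.mem_insert_self _ _))
      have h2 : ¬ ∀ i ∈ insert t2 C2, x i = Function.update p1 t2 (!p1 t2) i := by
        intro h
        have := h t2 (Finset.mem_insert_self _ _)
        simp only [Function.update_self] at this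
        exact hc (by rw [this]; simp)
      simp only [if_neg h1, if_neg h2, if_pos hq]
  · simp only [if_neg hq]
    have h1 : ¬ ∀ i ∈ insert t2 C2, x i = p1 i := by
      intro h; exact hq fun i hi => (h i (Finset.mem_insert_of_mem hi)).trans (hp i hi)
    have h2 : ¬ ∀ i ∈ insert t2 C2, x i = Function.update p1 t2 (!p1 t2) i := by
      intro h
      apply hq
      intro i hi
      have := h i (Finset.mem_insert_of_mem hi)
      rwa [Function.update_of_ne (by rintro rfl; exact ht2 hi), hp i hi] at this
    simp only [if_neg h1, if_neg h2, if_neg hq]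
end

section
/- Complement trick: for any target t, the full-control Toffoli gate T(C,p,t) with C = all lines except t satisfies NOT_t ∘ T(C,p,t) = composition over all assignments q ≠ p of T(C,q,t). -/
lemma toffoli_eq_update (n : ℕ) (C : Finset (Fin n)) (q : Fin n → Bool) (t : Fin n)
    (x : Fin n → Bool) :
    toffoli n C q t x = Function.update x t (xor (indicator n C q x) (x t)) := by
  unfold toffoli indicator
  by_cases h : ∀ i ∈ C, x i = q i
  · rw [if_pos h, decide_eq_true h, Bool.true_xor]
  · rw [if_neg h, decide_eq_false h, Bool.false_xor, Function.update_eq_self]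

lemma indicator_update (n : ℕ) (q : Fin n → Bool) (t : Fin n) (x : Fin n → Bool) (b : Bool) :
    indicator n (Finset.univ.erase t) q (Function.update x t b) =
      indicator n (Finset.univ.erase t) q x := by
  unfold indicator
  apply decide_eq_decide.2
  constructor <;> intro h i hi <;>
    have := h i hi <;>
    simpa [Function.update_of_ne (Finset.ne_of_mem_erase hi)] using this

lemma fold_eval (n : ℕ) (t : Fin n) (L : List (Fin n → Bool)) (x : Fin n → Bool) :
    (L.foldr (fun q g => toffoli n (Finset.univ.erase t) q t ∘ g) id) x =
      Function.update x t
        (xor (L.foldr (fun q b => xor (indicator n (Finset.univ.erase t) q x) b) false) (x t)) := by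
  induction L with
  | nil => simp [Function.update_eq_self]
  | cons q L ih =>
    simp only [List.foldr_cons, Function.comp_apply, ih, toffoli_eq_update,
      indicator_update, Function.update_self, Function.update_idem]

    cases indicator n (Finset.univ.erase t) q x <;>
      cases L.foldr (fun q b => xor (indicator n (Finset.univ.erase t) q x) b) false <;>
      cases x t <;> rfl

lemma parity_eq (q0 : Fin n → Bool) (L : List (Fin n → Bool)) (hL : L.Nodup)
    (f : (Fin n → Bool) → Bool) (hf : ∀ q ∈ L, f q = decide (q = q0)) :
    L.foldr (fun q b => xor (f q) b) false = decide (q0 ∈ L) := by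
  induction L with
  | nil => simp
  | cons a L ih =>
    simp only [List.foldr_cons]
    rw [ih hL.of_cons (fun q hq => hf q (List.mem_cons_of_mem _ hq)),
      hf a List.mem_cons_self]
    by_cases h : a = q0
    · subst h
      have : a ∉ L := List.Nodup.notMem hL
      simp [this]
    · simp [h, Ne.symm h, List.mem_cons]

theorem complement_trick (n : ℕ) (t : Fin n) (p : Fin n → Bool) (hp : p t = true) :
    notGate n t ∘ toffoli n (Finset.univ.erase t) p t =
      (((Finset.univ : Finset (Fin n → Bool)).filter
            (fun q => q ≠ p ∧ q t = p t)).toList).foldr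
        (fun q g => toffoli n (Finset.univ.erase t) q t ∘ g) id := by
  funext x
  set S := ((Finset.univ : Finset (Fin n → Bool)).filter (fun q => q ≠ p ∧ q t = p t)) with hS
  set q0 : Fin n → Bool := Function.update x t (p t) with hq0
  have hq0t : q0 t = p t := Function.update_self _ _ _
  have hq0i : ∀ i, i ≠ t → q0 i = x i := fun i hi => Function.update_of_ne hi _ _
  -- RHS
  rw [fold_eval]
  have hparity :
      S.toList.foldr (fun q b => xor (indicator n (Finset.univ.erase t) q x) b) false =
        decide (q0 ∈ S.toList) := by
    apply parity_eq q0 _ S.nodup_toList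
    intro q hq
    rw [Finset.mem_toList, hS, Finset.mem_filter] at hq
    obtain ⟨-, -, hqt⟩ := hq
    unfold indicator
    apply decide_eq_decide.2
    constructor
    · intro h
      funext i
      by_cases hi : i = t
      · subst hi; rw [hqt, hq0t]
      · rw [hq0i i hi, h i (Finset.mem_erase.2 ⟨hi, Finset.mem_univ i⟩)]
    · intro h i hi
      have hit := Finset.ne_of_mem_erase hi
      rw [h, hq0i i hit]
  rw [hparity]
  have hmem : decide (q0 ∈ S.toList) = !(indicator n (Finset.univ.erase t) p x) := by
    have hiff : q0 ∈ S.toList ↔ ¬ (∀ i ∈ Finset.univ.erase t, x i = p i) := by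
      rw [Finset.mem_toList, hS, Finset.mem_filter]
      constructor
      · rintro ⟨-, hne, -⟩ h
        apply hne
        funext i
        by_cases hi : i = t
        · subst hi; exact hq0t
        · rw [hq0i i hi, h i (Finset.mem_erase.2 ⟨hi, Finset.mem_univ i⟩)]
      · intro h
        refine ⟨Finset.mem_univ _, ?_, hq0t⟩
        intro he
        apply h
        intro i hi
        have hit := Finset.ne_of_mem_erase hi
        rw [← hq0i i hit, he]
    unfold indicator
    by_cases h : ∀ i ∈ Finset.univ.erase t, x i = p i
    · have h1 : q0 ∉ S.toList := fun hm => (hiff.1 hm) h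
      rw [decide_eq_false h1, decide_eq_true h]
      rfl
    · have h1 : q0 ∈ S.toList := hiff.2 h
      rw [decide_eq_true h1, decide_eq_false h]
      rfl
  rw [hmem]
  -- LHS
  simp only [Function.comp_apply, toffoli_eq_update, notGate, Function.update_self,
    Function.update_idem, indicator_update]

  cases indicator n (Finset.univ.erase t) p x <;> cases x t <;> rfl
end
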